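/- Let $T$ be a Griffiths nonnegative tensor on $\mathbb{C}^n$ (with the Kähler symmetries $T_{\overline{j}i\overline{l}k} = T_{\overline{l}i\overline{j}k} = T_{\overline{j}k\overline{l}i}$), let $\zeta \in \mathbb{C}^{n\times n}$, let $q \geq 3$, and for each $n$-tuple $\sigma$ of $q$-th roots of unity define vectors $V_{(\sigma)}, W_{(\sigma)} \in \mathbb{C}^n$ by $V_{(\sigma)}^i = \sum_{\lambda=1}^n \zeta^{i\lambda}\overline{\sigma_\lambda}$ and $W_{(\sigma)}^k = \sigma_k$. Then $q^{-n}\sum_{\sigma \in U_q^n} \sum_{i,j,k,l} T_{\overline{j}i\overline{l}k}\, \overline{V_{(\sigma)}^j} V_{(\sigma)}^i \overline{W_{(\sigma)}^l} W_{(\sigma)}^k = \sum_{i,j}\sum_{k \neq l} T_{\overline{j}i\overline{l}k}\overline{\zeta^{jl}}\zeta^{ik} + \sum_{i,j,k} S_{\overline{j}i} \overline{\zeta^{jk}}\zeta^{ik}$, where $S_{\overline{j}i} = \sum_m T_{\overline{j}i\overline{m}m}$. In particular this quantity is nonnegative. -/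

import Mathlib

open Complex Finset ComplexOrder

/-- Mathlib no longer provides a `Fintype` instance on `rootsOfUnity`, only `Finite`;
the sum over a `Fintype` does not depend on the chosen instance. -/
noncomputable instance rootsOfUnityFintypeC (q : ℕ) [NeZero q] : Fintype (rootsOfUnity q ℂ) :=
  Fintype.ofFinite _

open scoped ComplexConjugate

/-! Expanding the Griffiths form reduces the average over `σ` to the fourth moments
`∑_σ σ_b σ̄_a σ̄_l σ_k`. The map `σ ↦ σ_b σ_a⁻¹ σ_l⁻¹ σ_k` is a character of the finite group
`(μ_q)ⁿ`, so its sum vanishes unless the character is trivial; since `μ_q` has an element whose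
square is not `1` (this is where `q ≥ 3` enters), that happens exactly when `{b, k} = {a, l}` as
multisets. Collapsing the resulting sums gives the identity, and nonnegativity holds because every
summand is a value of the Griffiths form. -/

theorem forall_mul_eq_mul_iff_sym2_eq {ι H : Type*} [DecidableEq ι] [CommGroup H] {ω : H}
    (hω : ω ^ 2 ≠ 1) {a b k l : ι} :
    (∀ σ : ι → H, σ a * σ k = σ b * σ l) ↔ s(a, k) = s(b, l) := by
  refine ⟨fun h => Sym2.eq_iff.mpr ?_, ?_⟩
  · have hω1 : ω ≠ 1 := by rintro rfl; simp at hω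
    by_cases hab : a = b
    · subst hab
      have hk := h (Pi.mulSingle k ω)
      by_cases hlk : l = k
      · exact .inl ⟨rfl, hlk.symm⟩
      · simp [hlk, hω1] at hk
    by_cases hal : a = l
    · subst hal
      have hb := h (Pi.mulSingle b ω)
      by_cases hkb : k = b
      · exact .inr ⟨rfl, hkb⟩
      · simp [hab, hkb, hω1, eq_comm (a := (1 : H))] at hb
    have ha := h (Pi.mulSingle a ω)
    by_cases hka : k = a
    · subst hka
      simp [Ne.symm hab, Ne.symm hal, ← pow_two, hω] at ha
    · simp [Ne.symm hab, Ne.symm hal, hka, hω1] at ha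
  · rw [Sym2.eq_iff]
    rintro (⟨rfl, rfl⟩ | ⟨rfl, rfl⟩) σ
    · rfl
    · exact mul_comm _ _

theorem exists_rootsOfUnity_sq_ne_one {q : ℕ} [NeZero q] (hq : 3 ≤ q) :
    ∃ ω : rootsOfUnity q ℂ, ω ^ 2 ≠ 1 := by
  obtain ⟨ω, hω⟩ := IsCyclic.exists_ofOrder_eq_natCard (α := rootsOfUnity q ℂ)
  refine ⟨ω, fun h => ?_⟩
  have := Nat.le_of_dvd two_pos (hω ▸ orderOf_dvd_of_pow_eq_one h)
  rw [Complex.card_rootsOfUnity] at this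
  omega

theorem sum_pi_rootsOfUnity_mul_conj {ι : Type*} [Fintype ι] [DecidableEq ι] {q : ℕ} [NeZero q]
    (hq : 3 ≤ q) (a b k l : ι) :
    ∑ σ : ι → rootsOfUnity q ℂ, ((σ a : ℂˣ) : ℂ) * conj ((σ b : ℂˣ) : ℂ) *
        conj ((σ l : ℂˣ) : ℂ) * ((σ k : ℂˣ) : ℂ) =
      if s(a, k) = s(b, l) then (q : ℂ) ^ Fintype.card ι else 0 := by
  let ev := Pi.evalMonoidHom (fun _ : ι => rootsOfUnity q ℂ)
  let χ : (ι → rootsOfUnity q ℂ) →* ℂ := (Units.coeHom ℂ).comp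
    ((rootsOfUnity q ℂ).subtype.comp (ev a * (ev b)⁻¹ * (ev l)⁻¹ * ev k))
  have hχ : ∀ σ, χ σ = ((σ a : ℂˣ) : ℂ) * conj ((σ b : ℂˣ) : ℂ) *
        conj ((σ l : ℂˣ) : ℂ) * ((σ k : ℂˣ) : ℂ) := by
    intro σ
    simp [χ, ev, Complex.conj_rootsOfUnity (σ b).2, Complex.conj_rootsOfUnity (σ l).2]
  obtain ⟨ω, hω⟩ := exists_rootsOfUnity_sq_ne_one hq
  have hχ1 : χ = 1 ↔ s(a, k) = s(b, l) := by
    rw [← forall_mul_eq_mul_iff_sym2_eq hω, DFunLike.ext_iff]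
    refine forall_congr' fun σ => ?_
    simp [χ, ev, Units.ext_iff, Subtype.ext_iff]
    field_simp
  classical
  simp_rw [← hχ, sum_hom_units, hχ1, Fintype.card_fun, Fintype.card_eq_nat_card,
    Complex.card_rootsOfUnity]
  push_cast
  rfl

theorem sum_sum_ite_sym2_eq {ι M : Type*} [Fintype ι] [DecidableEq ι] [AddCommMonoid M]
    (F : ι → ι → M) (k l : ι) :
    ∑ b, ∑ a, (if s(b, k) = s(a, l) then F b a else 0) = if k = l then ∑ a, F a a else F l k := by
  split_ifs with hkl
  · subst hkl
    simp only [Sym2.congr_left, sum_ite_eq, mem_univ, if_true]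
  · have hsym : ∀ a b, s(b, k) = s(a, l) ↔ b = l ∧ a = k := by
      intro a b
      rw [Sym2.eq_iff]
      grind
    simp [hsym, ite_and]

theorem sum_pi_rootsOfUnity_averaging {ι : Type*} [Fintype ι] [DecidableEq ι] {q : ℕ} [NeZero q]
    (hq : 3 ≤ q) (u v : ι → ℂ) (k l : ι) :
    ∑ σ : ι → rootsOfUnity q ℂ, conj (∑ m, u m * conj ((σ m : ℂˣ) : ℂ)) *
        (∑ m, v m * conj ((σ m : ℂˣ) : ℂ)) * conj ((σ l : ℂˣ) : ℂ) * ((σ k : ℂˣ) : ℂ) =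
      (q : ℂ) ^ Fintype.card ι * if k = l then ∑ m, conj (u m) * v m else conj (u l) * v k := by
  calc _ = ∑ σ : ι → rootsOfUnity q ℂ, ∑ b, ∑ a, conj (u b) * v a *
          (((σ b : ℂˣ) : ℂ) * conj ((σ a : ℂˣ) : ℂ) * conj ((σ l : ℂˣ) : ℂ) *
            ((σ k : ℂˣ) : ℂ)) := by
        simp only [map_sum, map_mul, conj_conj]
        simp_rw [sum_mul_sum, sum_mul]
        exact sum_congr rfl fun σ _ => sum_congr rfl fun b _ => sum_congr rfl fun a _ => by ring
    _ = ∑ b, ∑ a, conj (u b) * v a * ∑ σ : ι → rootsOfUnity q ℂ,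
          ((σ b : ℂˣ) : ℂ) * conj ((σ a : ℂˣ) : ℂ) * conj ((σ l : ℂˣ) : ℂ) * ((σ k : ℂˣ) : ℂ) := by
        simp only [mul_sum]
        rw [sum_comm]
        exact sum_congr rfl fun b _ => sum_comm
    _ = ∑ b, ∑ a, if s(b, k) = s(a, l) then (q : ℂ) ^ Fintype.card ι * (conj (u b) * v a)
          else 0 := by
        refine sum_congr rfl fun b _ => sum_congr rfl fun a _ => ?_
        rw [sum_pi_rootsOfUnity_mul_conj hq]
        split_ifs <;> ring
    _ = _ := by rw [sum_sum_ite_sym2_eq, mul_ite, mul_sum]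

theorem sum_sum_mul_ite_eq {ι R : Type*} [Fintype ι] [DecidableEq ι] [CommSemiring R]
    (A : ι → ι → R) (x y : ι → R) :
    ∑ k, ∑ l, A l k * (if k = l then ∑ m, x m * y m else x l * y k) =
      (∑ k, ∑ l, if k = l then 0 else A l k * x l * y k) + ∑ k, (∑ m, A m m) * x k * y k := by
  have hsplit : ∀ k l, A l k * (if k = l then ∑ m, x m * y m else x l * y k) =
      (if k = l then 0 else A l k * x l * y k) + if k = l then A l k * ∑ m, x m * y m else 0 := by
    intro k l
    split_ifs <;> simp [mul_assoc]
  simp only [hsplit, sum_add_distrib, sum_ite_eq, mem_univ, if_true, mul_sum, sum_mul]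
  rw [sum_comm (s := univ) (t := univ) (f := fun k m => A k k * (x m * y m))]
  simp only [mul_assoc]

/-- `T j i l k` stands for `T_{j̄ i l̄ k}`. -/
def griffithsForm {ι : Type*} [Fintype ι] (T : ι → ι → ι → ι → ℂ) (V W : ι → ℂ) : ℂ :=
  ∑ i, ∑ j, ∑ k, ∑ l, T j i l k * conj (V j) * V i * conj (W l) * W k

theorem sum_griffithsForm_rootsOfUnity {ι : Type*} [Fintype ι] [DecidableEq ι] {q : ℕ}
    [NeZero q] (hq : 3 ≤ q) (T : ι → ι → ι → ι → ℂ) (ζ : ι → ι → ℂ) :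
    ∑ σ : ι → rootsOfUnity q ℂ,
        griffithsForm T (fun i => ∑ m, ζ i m * conj ((σ m : ℂˣ) : ℂ)) (fun k => (σ k : ℂˣ)) =
      (q : ℂ) ^ Fintype.card ι *
        ((∑ i, ∑ j, ∑ k, ∑ l, if k = l then 0 else T j i l k * conj (ζ j l) * ζ i k) +
          ∑ i, ∑ j, ∑ k, (∑ m, T j i m m) * conj (ζ j k) * ζ i k) := by
  calc _ = ∑ i, ∑ j, ∑ k, ∑ l, T j i l k * ∑ σ : ι → rootsOfUnity q ℂ,
          conj (∑ m, ζ j m * conj ((σ m : ℂˣ) : ℂ)) * (∑ m, ζ i m * conj ((σ m : ℂˣ) : ℂ)) *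
            conj ((σ l : ℂˣ) : ℂ) * ((σ k : ℂˣ) : ℂ) := by
        simp only [griffithsForm]
        simp_rw [sum_comm (γ := ι → rootsOfUnity q ℂ), mul_assoc, ← mul_sum]
    _ = _ := by
        simp_rw [sum_pi_rootsOfUnity_averaging hq, mul_left_comm _ ((q : ℂ) ^ Fintype.card ι),
          ← mul_sum, sum_sum_mul_ite_eq, sum_add_distrib]

theorem stmt11_general (n q : ℕ) [NeZero q] (hq : 3 ≤ q)
    (T : Fin n → Fin n → Fin n → Fin n → ℂ)
    (hGr : ∀ V W : Fin n → ℂ, 0 ≤ ∑ i, ∑ j, ∑ k, ∑ l,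
      T j i l k * (starRingEnd ℂ) (V j) * V i * (starRingEnd ℂ) (W l) * W k)
    (ζ : Fin n → Fin n → ℂ) :
    (((q : ℂ) ^ n)⁻¹ *
        ∑ σ : Fin n → rootsOfUnity q ℂ, ∑ i, ∑ j, ∑ k, ∑ l,
          T j i l k *
            (starRingEnd ℂ) (∑ lam, ζ j lam * (starRingEnd ℂ) ((σ lam : ℂˣ) : ℂ)) *
            (∑ lam, ζ i lam * (starRingEnd ℂ) ((σ lam : ℂˣ) : ℂ)) *
            (starRingEnd ℂ) ((σ l : ℂˣ) : ℂ) * ((σ k : ℂˣ) : ℂ)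
      = (∑ i, ∑ j, ∑ k, ∑ l, if k = l then 0
            else T j i l k * (starRingEnd ℂ) (ζ j l) * ζ i k)
        + ∑ i, ∑ j, ∑ k,
            (∑ m, T j i m m) * (starRingEnd ℂ) (ζ j k) * ζ i k) ∧
    (0 ≤ (∑ i, ∑ j, ∑ k, ∑ l, if k = l then 0
            else T j i l k * (starRingEnd ℂ) (ζ j l) * ζ i k)
        + ∑ i, ∑ j, ∑ k,
            (∑ m, T j i m m) * (starRingEnd ℂ) (ζ j k) * ζ i k) := by
  have hq0 : (q : ℂ) ^ n ≠ 0 := pow_ne_zero _ (Nat.cast_ne_zero.mpr (NeZero.ne q))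
  have hsum := congrArg (((q : ℂ) ^ n)⁻¹ * ·) (sum_griffithsForm_rootsOfUnity hq T ζ)
  rw [Fintype.card_fin, inv_mul_cancel_left₀ hq0] at hsum
  exact ⟨hsum, hsum ▸ mul_nonneg (by positivity) (sum_nonneg fun σ _ => hGr _ _)⟩

/-- The averaging identity in the proof of Lemma 5: for a Griffiths nonnegative
tensor `T` with the Kähler symmetries, a matrix `ζ`, and `q ≥ 3`, averaging the
Griffiths form of `T` on the vectors `V_(σ)^i = ∑_λ ζ^{iλ} conj σ_λ`,
`W_(σ)^k = σ_k` over all `n`-tuples `σ` of `q`-th roots of unity gives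
`∑_{i,j} ∑_{k≠l} T_{j̄il̄k} conj ζ^{jl} ζ^{ik} + ∑_{i,j,k} S_{j̄i} conj ζ^{jk} ζ^{ik}`
with `S_{j̄i} = ∑_m T_{j̄im̄m}`; in particular this quantity is nonnegative.
Indices of `T j i l k` are in the order `j̄ i l̄ k`. -/
theorem stmt11 (n q : ℕ) [NeZero q] (hq : 3 ≤ q)
    (T : Fin n → Fin n → Fin n → Fin n → ℂ)
    (hsym1 : ∀ i j k l, T j i l k = T l i j k)
    (hsym2 : ∀ i j k l, T j i l k = T j k l i)
    (hGr : ∀ V W : Fin n → ℂ, 0 ≤ ∑ i, ∑ j, ∑ k, ∑ l,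
      T j i l k * (starRingEnd ℂ) (V j) * V i * (starRingEnd ℂ) (W l) * W k)
    (ζ : Fin n → Fin n → ℂ) :
    (((q : ℂ) ^ n)⁻¹ *
        ∑ σ : Fin n → rootsOfUnity q ℂ, ∑ i, ∑ j, ∑ k, ∑ l,
          T j i l k *
            (starRingEnd ℂ) (∑ lam, ζ j lam * (starRingEnd ℂ) ((σ lam : ℂˣ) : ℂ)) *
            (∑ lam, ζ i lam * (starRingEnd ℂ) ((σ lam : ℂˣ) : ℂ)) *
            (starRingEnd ℂ) ((σ l : ℂˣ) : ℂ) * ((σ k : ℂˣ) : ℂ)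
      = (∑ i, ∑ j, ∑ k, ∑ l, if k = l then 0
            else T j i l k * (starRingEnd ℂ) (ζ j l) * ζ i k)
        + ∑ i, ∑ j, ∑ k,
            (∑ m, T j i m m) * (starRingEnd ℂ) (ζ j k) * ζ i k) ∧
    (0 ≤ (∑ i, ∑ j, ∑ k, ∑ l, if k = l then 0
            else T j i l k * (starRingEnd ℂ) (ζ j l) * ζ i k)
        + ∑ i, ∑ j, ∑ k,
            (∑ m, T j i m m) * (starRingEnd ℂ) (ζ j k) * ζ i k) :=
  stmt11_general n q hq T hGr ζ
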